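/- Let c ≠ r be a connecting point of a rooted cactus digraph (G, r) with δ⁻(c) = δ⁺(c) = n ≥ 2, incoming arcs (x_1,c),...,(x_n,c) and outgoing arcs (c,y_1),...,(c,y_n). Then the minimum sub-cactus digraph C(c) contains exactly one of the x_i and exactly one of the y_j; assuming these are x_1 and y_1, one has x_1 ≼ c, y_1 ≼ c, and c ≺ x_i and c ≺ y_j for all 2 ≤ i, j ≤ n. -/

import Mathlib

structure DirGraph (V : Type) where
  Adj : V → V → Prop
  loopless : ∀ v, ¬ Adj v v

namespace DirGraph

variable {V V' : Type}

/-- A walk is a nonempty list of vertices with consecutive arcs. -/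
def IsWalk (G : DirGraph V) : List V → Prop
  | [] => False
  | [_] => True
  | a :: b :: l => G.Adj a b ∧ G.IsWalk (b :: l)

def IsWalkFromTo (G : DirGraph V) (p : List V) (x y : V) : Prop :=
  G.IsWalk p ∧ p.head? = some x ∧ p.getLast? = some y

def StronglyConnected (G : DirGraph V) : Prop :=
  ∀ x y : V, ∃ p, G.IsWalkFromTo p x y

def IsSimplePath (G : DirGraph V) (p : List V) : Prop :=
  G.IsWalk p ∧ p.Nodup

def IsSimplePathFromTo (G : DirGraph V) (p : List V) (x y : V) : Prop :=
  G.IsSimplePath p ∧ p.head? = some x ∧ p.getLast? = some y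

/-- The arcs of a walk given as a list of vertices. -/
def arcs (p : List V) : List (V × V) := p.zip p.tail

/-- The preterminal (second-to-last) vertex of a path. -/
def preterminal (p : List V) : Option V := p.dropLast.getLast?

/-- A simple cycle: a closed walk whose vertices are distinct except for the
repeated endpoint. -/
def IsSimpleCycle (G : DirGraph V) (p : List V) : Prop :=
  G.IsWalk p ∧ 2 ≤ p.length ∧ p.head? = p.getLast? ∧ p.dropLast.Nodup

/-- Two cycles are equal as cycles when they have the same set of arcs. -/
def CycleEquiv (p q : List V) : Prop :=
  ∀ a : V × V, a ∈ arcs p ↔ a ∈ arcs q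

/-- Each arc lies in exactly one simple cycle (up to arc-set equality). -/
def CactusArcCond (G : DirGraph V) : Prop :=
  ∀ x y, G.Adj x y →
    (∃ p, G.IsSimpleCycle p ∧ (x, y) ∈ arcs p) ∧
    (∀ p q, G.IsSimpleCycle p → (x, y) ∈ arcs p →
      G.IsSimpleCycle q → (x, y) ∈ arcs q → CycleEquiv p q)

/-- A cactus digraph: strongly connected and each arc lies in exactly one
simple cycle. -/
def IsCactus (G : DirGraph V) : Prop :=
  G.StronglyConnected ∧ G.CactusArcCond

noncomputable def inDeg (G : DirGraph V) (v : V) : ℕ := Nat.card {u // G.Adj u v}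
noncomputable def outDeg (G : DirGraph V) (v : V) : ℕ := Nat.card {u // G.Adj v u}

/-- A connecting point: a vertex shared by two distinct simple cycles. -/
def IsConnectingPoint (G : DirGraph V) (v : V) : Prop :=
  ∃ p q, G.IsSimpleCycle p ∧ G.IsSimpleCycle q ∧ ¬ CycleEquiv p q ∧ v ∈ p ∧ v ∈ q

/-- An expansion of digraphs. -/
structure IsExpansion (G' : DirGraph V') (G : DirGraph V) (φ : V' → V) : Prop where
  map_adj : ∀ ⦃x y⦄, G'.Adj x y → G.Adj (φ x) (φ y)
  vert_surj : Function.Surjective φ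
  arc_surj : ∀ ⦃x y⦄, G.Adj x y → ∃ x' y', G'.Adj x' y' ∧ φ x' = x ∧ φ y' = y
  lift : ∀ ⦃x y⦄, G.Adj x y → ∀ y', φ y' = y → ∃! x', G'.Adj x' y' ∧ φ x' = x

/-- A doubly bidirectionally connected pair. -/
def Dbcp (G : DirGraph V) (p q : V) : Prop :=
  p ≠ q ∧
  (∃ P Q, G.IsSimplePathFromTo P p q ∧ G.IsSimplePathFromTo Q p q ∧
    preterminal P ≠ preterminal Q) ∧
  (∃ P Q, G.IsSimplePathFromTo P q p ∧ G.IsSimplePathFromTo Q q p ∧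
    preterminal P ≠ preterminal Q)

/-- Subgraph of a digraph: a vertex subset together with a subrelation of arcs
supported on it. -/
structure Subgraph (G : DirGraph V) where
  verts : Set V
  Adj : V → V → Prop
  adj_sub : ∀ ⦃x y⦄, Adj x y → G.Adj x y
  mem_left : ∀ ⦃x y⦄, Adj x y → x ∈ verts
  mem_right : ∀ ⦃x y⦄, Adj x y → y ∈ verts

def Subgraph.toDirGraph {G : DirGraph V} (H : Subgraph G) : DirGraph V :=
  ⟨H.Adj, fun v h => G.loopless v (H.adj_sub h)⟩

/-- A sub-cactus digraph: a nonempty subgraph that is strongly connected (on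
its vertex set) and in which each arc lies in exactly one simple cycle. -/
def Subgraph.IsCactus {G : DirGraph V} (H : Subgraph G) : Prop :=
  H.verts.Nonempty ∧
  (∀ x ∈ H.verts, ∀ y ∈ H.verts, ∃ p, H.toDirGraph.IsWalkFromTo p x y) ∧
  H.toDirGraph.CactusArcCond

def Subgraph.inter {G : DirGraph V} (H K : Subgraph G) : Subgraph G where
  verts := H.verts ∩ K.verts
  Adj x y := H.Adj x y ∧ K.Adj x y
  adj_sub := fun _ _ h => H.adj_sub h.1
  mem_left := fun _ _ h => ⟨H.mem_left h.1, K.mem_left h.2⟩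
  mem_right := fun _ _ h => ⟨H.mem_right h.1, K.mem_right h.2⟩

def Subgraph.le {G : DirGraph V} (H K : Subgraph G) : Prop :=
  H.verts ⊆ K.verts ∧ ∀ ⦃x y⦄, H.Adj x y → K.Adj x y

/-- The single-vertex subgraph. -/
def singleVert (G : DirGraph V) (v : V) : Subgraph G where
  verts := {v}
  Adj _ _ := False
  adj_sub := by intro _ _ h; exact h.elim
  mem_left := by intro _ _ h; exact h.elim
  mem_right := by intro _ _ h; exact h.elim

/-- The intersection of all sub-cactus digraphs of `G` containing `W`. -/
def CsubOf (G : DirGraph V) (W : Set V) : Subgraph G where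
  verts := {x | ∀ H : Subgraph G, H.IsCactus → W ⊆ H.verts → x ∈ H.verts}
  Adj x y := G.Adj x y ∧ ∀ H : Subgraph G, H.IsCactus → W ⊆ H.verts → H.Adj x y
  adj_sub := fun _ _ h => h.1
  mem_left := fun _ _ h H hH hW => H.mem_left (h.2 H hH hW)
  mem_right := fun _ _ h H hH hW => H.mem_right (h.2 H hH hW)

open Classical in
/-- `C G r v`: the minimum sub-cactus digraph containing `{r, v}` (and the
single vertex `{r}` when `v = r`). -/
noncomputable def C (G : DirGraph V) (r v : V) : Subgraph G :=
  if v = r then singleVert G r else CsubOf G {r, v}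

/-- The preorder on vertices of the rooted cactus digraph `(G, r)`:
`v ≼ w ↔ C(v) ⊆ C(w)`. -/
def pre (G : DirGraph V) (r v w : V) : Prop :=
  Subgraph.le (C G r v) (C G r w)

end DirGraph

/-!
In a cactus, simple paths are unique: if two simple paths from `a` to `b` left `a` along
different arcs `(a, u)` and `(a, v)`, closing each of them with the last arc `(s, a)` of a walk
from `b` back to `a` would give two simple cycles through `(s, a)` with different arcs out of `a`.
Hence the simple path between two vertices of a simple cycle `Z` runs along `Z`, so any walk
between two distinct vertices of `Z` enters its endpoint (and leaves its start) along an arc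
of `Z`; and a sub-cactus contains every simple path between two of its vertices.

Let `P` and `Q` be the simple paths from `r` to `c` and back, with last arc `(p, c)` and first
arc `(c, q)`. The simple cycles through the arcs of the closed walk `Q ++ P.tail` form a
sub-cactus containing `r` and `c`, hence containing `C(c)`, and each of them contains `(p, c)` and
`(c, q)`: these are the only arcs of `C(c)` at `c`. For any other in-neighbour `x` of `c` and any
sub-cactus `H` containing `r` and `x`, a walk from `x` to `r` in `H` followed by `P` enters `c`
along an arc of the cycle through `(x, c)`; that arc is not `(p, c)`, so it is an arc of `H`,
and `c ∈ H`. Thus `c ≼ x`, while `x ≼ c` would put `x`, hence the arc `(x, c)`, into `C(c)`.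
Out-neighbours are symmetric.
-/

namespace DirGraph

variable {V : Type}

section Arcs

variable {R : V → V → Prop}

@[simp] lemma arcs_nil : arcs ([] : List V) = [] := rfl

@[simp] lemma arcs_singleton (a : V) : arcs [a] = [] := rfl

@[simp] lemma arcs_cons_cons (a b : V) (l : List V) :
    arcs (a :: b :: l) = (a, b) :: arcs (b :: l) := rfl

lemma mem_arcs_iff {x y : V} {l : List V} :
    (x, y) ∈ arcs l ↔ ∃ l₁ l₂, l = l₁ ++ x :: y :: l₂ := by
  induction l with
  | nil => simp
  | cons a l ih =>
    rcases l with _ | ⟨b, l⟩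
    · simp only [arcs_singleton, List.not_mem_nil, false_iff]
      rintro ⟨l₁, l₂, h⟩
      have := congrArg List.length h
      simp at this
      omega
    rw [arcs_cons_cons, List.mem_cons, ih, Prod.mk.injEq]
    constructor
    · rintro (⟨rfl, rfl⟩ | ⟨l₁, l₂, h⟩)
      · exact ⟨[], l, rfl⟩
      · exact ⟨a :: l₁, l₂, by rw [h, List.cons_append]⟩
    · rintro ⟨_ | ⟨a', l₁⟩, l₂, h⟩
      · simp_all
      · simp only [List.cons_append, List.cons.injEq] at h
        exact Or.inr ⟨l₁, l₂, h.2⟩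

lemma isChain_iff_forall_mem_arcs {l : List V} :
    l.IsChain R ↔ ∀ x y, (x, y) ∈ arcs l → R x y := by
  simp only [List.isChain_iff_forall_rel_of_append_cons_cons, mem_arcs_iff]
  exact ⟨fun h x y ⟨l₁, l₂, hl⟩ => h hl, fun h x y l₁ l₂ hl => h x y ⟨l₁, l₂, hl⟩⟩

lemma isChain_mem_arcs (l : List V) : l.IsChain (fun x y => (x, y) ∈ arcs l) :=
  isChain_iff_forall_mem_arcs.2 fun _ _ => id

lemma fst_mem_of_mem_arcs {x y : V} {l : List V} (h : (x, y) ∈ arcs l) : x ∈ l := by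
  obtain ⟨l₁, l₂, rfl⟩ := mem_arcs_iff.1 h
  simp

lemma snd_mem_of_mem_arcs {x y : V} {l : List V} (h : (x, y) ∈ arcs l) : y ∈ l := by
  obtain ⟨l₁, l₂, rfl⟩ := mem_arcs_iff.1 h
  simp

lemma fst_mem_dropLast_of_mem_arcs {x y : V} {l : List V} (h : (x, y) ∈ arcs l) :
    x ∈ l.dropLast := by
  obtain ⟨l₁, l₂, rfl⟩ := mem_arcs_iff.1 h
  rw [show l₁ ++ x :: y :: l₂ = (l₁ ++ [x]) ++ (y :: l₂) by simp,
    List.dropLast_append_of_ne_nil (by simp)]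
  simp

lemma snd_mem_tail_of_mem_arcs {x y : V} {l : List V} (h : (x, y) ∈ arcs l) : y ∈ l.tail := by
  obtain ⟨_ | ⟨a, l₁⟩, l₂, rfl⟩ := mem_arcs_iff.1 h <;> simp

lemma exists_mem_arcs_of_mem {v : V} {l : List V} (hv : v ∈ l) (hl : 2 ≤ l.length) :
    ∃ w, (v, w) ∈ arcs l ∨ (w, v) ∈ arcs l := by
  obtain ⟨l₁, l₂, rfl⟩ := List.append_of_mem hv
  rcases l₂ with _ | ⟨w, l₂⟩
  · obtain ⟨l₀, w, rfl⟩ : ∃ l₀ w, l₁ = l₀ ++ [w] :=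
      ⟨l₁.dropLast, l₁.getLast (by rintro rfl; simp at hl),
        (List.dropLast_append_getLast _).symm⟩
    exact ⟨w, Or.inr (mem_arcs_iff.2 ⟨l₀, [], by simp⟩)⟩
  · exact ⟨w, Or.inl (mem_arcs_iff.2 ⟨l₁, l₂, rfl⟩)⟩

lemma two_le_length_of_mem_arcs {x y : V} {l : List V} (h : (x, y) ∈ arcs l) :
    2 ≤ l.length := by
  obtain ⟨l₁, l₂, rfl⟩ := mem_arcs_iff.1 h
  simp only [List.length_append, List.length_cons]
  omega

lemma arcs_subset_of_isInfix {l l' : List V} (h : l <:+: l') : arcs l ⊆ arcs l' := by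
  rintro ⟨x, y⟩ hxy
  obtain ⟨l₁, l₂, rfl⟩ := mem_arcs_iff.1 hxy
  obtain ⟨s, t, rfl⟩ := h
  exact mem_arcs_iff.2 ⟨s ++ l₁, l₂ ++ t, by simp⟩

lemma snd_eq_of_mem_arcs {x y y' : V} {l : List V} (hl : l.dropLast.Nodup)
    (h : (x, y) ∈ arcs l) (h' : (x, y') ∈ arcs l) : y = y' := by
  induction l with
  | nil => simp at h
  | cons a l ih =>
    rcases l with _ | ⟨b, l⟩
    · simp at h
    rw [List.dropLast_cons_cons, List.nodup_cons] at hl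
    simp only [arcs_cons_cons, List.mem_cons, Prod.mk.injEq] at h h'
    rcases h with ⟨rfl, rfl⟩ | h <;> rcases h' with ⟨h₁, rfl⟩ | h'
    · rfl
    · exact absurd (fst_mem_dropLast_of_mem_arcs h') hl.1
    · exact absurd (h₁ ▸ fst_mem_dropLast_of_mem_arcs h) hl.1
    · exact ih hl.2 h h'

lemma fst_eq_of_mem_arcs {x x' y : V} {l : List V} (hl : l.tail.Nodup)
    (h : (x, y) ∈ arcs l) (h' : (x', y) ∈ arcs l) : x = x' := by
  induction l with
  | nil => simp at h
  | cons a l ih =>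
    rcases l with _ | ⟨b, l⟩
    · simp at h
    rw [List.tail_cons, List.nodup_cons] at hl
    simp only [arcs_cons_cons, List.mem_cons, Prod.mk.injEq] at h h'
    rcases h with ⟨rfl, rfl⟩ | h <;> rcases h' with ⟨rfl, h'⟩ | h'
    · rfl
    · exact absurd (snd_mem_tail_of_mem_arcs h') hl.1
    · exact absurd (h' ▸ snd_mem_tail_of_mem_arcs h) hl.1
    · exact ih hl.2 h h'

lemma exists_mem_arcs_head {a b : V} {l : List V} (hh : l.head? = some a)
    (hl : l.getLast? = some b) (hab : a ≠ b) : ∃ z, (a, z) ∈ arcs l := by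
  match l with
  | [x] => simp_all
  | x :: z :: l => exact ⟨z, by simp_all⟩

lemma exists_mem_arcs_getLast {a b : V} {l : List V} (hh : l.head? = some a)
    (hl : l.getLast? = some b) (hab : a ≠ b) : ∃ z, (z, b) ∈ arcs l := by
  have hne : l ≠ [] := by rintro rfl; simp at hh
  have hb : l.getLast hne = b := by simpa [List.getLast?_eq_some_getLast hne] using hl
  have hne' : l.dropLast ≠ [] := by
    rintro h
    have := List.dropLast_append_getLast hne
    rw [h, hb, List.nil_append] at this
    simp [← this] at hh
    exact hab hh.symm
  refine ⟨l.dropLast.getLast hne', mem_arcs_iff.2 ⟨l.dropLast.dropLast, [], ?_⟩⟩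
  conv_lhs => rw [← List.dropLast_append_getLast hne, ← List.dropLast_append_getLast hne', hb]
  simp

lemma mem_arcs_append_cons {l m : List V} {b : V} {e : V × V} :
    e ∈ arcs (l ++ b :: m) ↔ e ∈ arcs (l ++ [b]) ∨ e ∈ arcs (b :: m) := by
  induction l with
  | nil => simp
  | cons a l ih =>
    rcases l with _ | ⟨a', l⟩
    · simp
    · simp only [List.cons_append, arcs_cons_cons, List.mem_cons] at ih ⊢
      rw [ih, or_assoc]

lemma mem_arcs_append_tail {l l' : List V} (h : l.getLast? = l'.head?) {e : V × V} :
    e ∈ arcs (l ++ l'.tail) ↔ e ∈ arcs l ∨ e ∈ arcs l' := by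
  rcases l' with _ | ⟨b, m⟩
  · rw [List.head?_nil, List.getLast?_eq_none_iff] at h
    simp [h]
  · have hne : l ≠ [] := by rintro rfl; simp at h
    rw [List.getLast?_eq_some_getLast hne, List.head?_cons, Option.some_inj] at h
    rw [List.tail_cons, ← List.dropLast_append_getLast hne, h, List.append_assoc,
      List.singleton_append, mem_arcs_append_cons]

lemma isChain_append_tail {l l' : List V} (hl : l.IsChain R) (hl' : l'.IsChain R)
    (h : l.getLast? = l'.head?) : (l ++ l'.tail).IsChain R :=
  isChain_iff_forall_mem_arcs.2 fun x y hxy => ((mem_arcs_append_tail h).1 hxy).elim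
    (isChain_iff_forall_mem_arcs.1 hl x y) (isChain_iff_forall_mem_arcs.1 hl' x y)

lemma getLast?_append_tail {l l' : List V} (h : l.getLast? = l'.head?) :
    (l ++ l'.tail).getLast? = l'.getLast? := by
  rcases l' with _ | ⟨b, _ | ⟨b', m⟩⟩
  · rw [List.head?_nil, List.getLast?_eq_none_iff] at h
    simp [h]
  · simpa using h
  · rw [List.tail_cons, List.getLast?_append_of_ne_nil _ (List.cons_ne_nil _ _),
      List.getLast?_cons_cons]

lemma notMem_tail_of_head? {a : V} {l : List V} (hl : l.Nodup) (h : l.head? = some a) :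
    a ∉ l.tail := by
  rcases l with _ | ⟨b, l⟩
  · simp at h
  · obtain rfl : b = a := by simpa using h
    exact (List.nodup_cons.1 hl).1

lemma notMem_dropLast_of_getLast? {a : V} {l : List V} (hl : l.Nodup)
    (h : l.getLast? = some a) : a ∉ l.dropLast := by
  have hne : l ≠ [] := by rintro rfl; simp at h
  rw [List.getLast?_eq_some_getLast hne, Option.some_inj] at h
  rw [← List.dropLast_append_getLast hne, h, List.nodup_append] at hl
  exact fun ha => hl.2.2 a ha a (List.mem_singleton_self a) rfl

lemma mem_arcs_append_singleton {s a : V} {l : List V} (hl : l.getLast? = some s) :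
    (s, a) ∈ arcs (l ++ [a]) := by
  have hne : l ≠ [] := by rintro rfl; simp at hl
  rw [List.getLast?_eq_some_getLast hne, Option.some_inj] at hl
  refine mem_arcs_iff.2 ⟨l.dropLast, [], ?_⟩
  conv_lhs => rw [← List.dropLast_append_getLast hne, hl]
  simp

end Arcs

section Walks

variable {R : V → V → Prop} {G : DirGraph V}

lemma reflTransGen_of_mem_of_head? {a b : V} {l : List V} (hl : l.IsChain R)
    (ha : l.head? = some a) (hb : b ∈ l) : Relation.ReflTransGen R a b :=
  hl.induction _ _ (fun _ _ h hx => hx.tail h)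
    (fun hne => by rw [List.head?_eq_some_head hne, Option.some_inj] at ha; rw [ha]) b hb

lemma reflTransGen_of_mem_of_getLast? {a b : V} {l : List V} (hl : l.IsChain R)
    (hb : l.getLast? = some b) (ha : a ∈ l) : Relation.ReflTransGen R a b :=
  hl.backwards_induction (Relation.ReflTransGen R · b) _ (fun _ _ h hy => hy.head h)
    (fun hne => by rw [List.getLast?_eq_some_getLast hne, Option.some_inj] at hb; rw [hb]) a ha

lemma reflTransGen_of_mem_of_closed {a b : V} {l : List V} (hl : l.IsChain R)
    (hcl : l.head? = l.getLast?) (ha : a ∈ l) (hb : b ∈ l) : Relation.ReflTransGen R a b := by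
  obtain ⟨c, hc⟩ := Option.isSome_iff_exists.1 (List.isSome_head?.2 (List.ne_nil_of_mem ha))
  exact (reflTransGen_of_mem_of_getLast? hl (hcl ▸ hc) ha).trans
    (reflTransGen_of_mem_of_head? hl hc hb)

lemma exists_nodup_isChain_of_reflTransGen {x y : V} (h : Relation.ReflTransGen R x y) :
    ∃ l : List V, l.IsChain R ∧ l.Nodup ∧ l.head? = some x ∧ l.getLast? = some y := by
  induction h using Relation.ReflTransGen.head_induction_on with
  | refl => exact ⟨[y], by simp⟩
  | @head a c hac _ ih =>
    obtain ⟨l, hl, hnd, hh, hlast⟩ := ih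
    by_cases ha : a ∈ l
    · obtain ⟨l₁, l₂, rfl⟩ := List.append_of_mem ha
      refine ⟨a :: l₂, hl.suffix ⟨l₁, rfl⟩, hnd.sublist (List.sublist_append_right _ _), rfl, ?_⟩
      rwa [List.getLast?_append_of_ne_nil _ (List.cons_ne_nil _ _)] at hlast
    · rcases l with _ | ⟨c', l⟩
      · simp at hh
      obtain rfl : c' = c := by simpa using hh
      refine ⟨a :: c' :: l, hl.cons_cons hac, List.nodup_cons.2 ⟨ha, hnd⟩, rfl, ?_⟩
      rwa [List.getLast?_cons_cons]

lemma reflTransGen_avoiding_of_isChain {a w b : V} {l : List V} (hl : l.IsChain R) (ha : a ∉ l)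
    (hw : l.head? = some w) (hb : b ∈ l) :
    Relation.ReflTransGen (fun x y => R x y ∧ y ≠ a) w b :=
  reflTransGen_of_mem_of_head? (hl.imp_of_mem_imp fun _ _ _ hy h => ⟨h, fun h' => ha (h' ▸ hy)⟩)
    hw hb

lemma exists_reflTransGen_avoiding {R : V → V → Prop} {a b : V}
    (h : Relation.ReflTransGen R b a) (hb : b ≠ a) :
    ∃ s, Relation.ReflTransGen (fun x y => R x y ∧ y ≠ a) b s ∧ R s a := by
  induction h using Relation.ReflTransGen.head_induction_on with
  | refl => exact absurd rfl hb
  | @head x c hxc _ ih =>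
    by_cases hc : c = a
    · subst hc
      exact ⟨x, .refl, hxc⟩
    · obtain ⟨s, hs, hsa⟩ := ih hc
      exact ⟨s, hs.head ⟨hxc, hc⟩, hsa⟩

lemma isWalk_iff {p : List V} : G.IsWalk p ↔ p ≠ [] ∧ p.IsChain G.Adj := by
  induction p with
  | nil => simp [IsWalk]
  | cons a p ih =>
    rcases p with _ | ⟨b, p⟩
    · simp [IsWalk]
    rw [IsWalk, ih, List.isChain_cons_cons]
    simp

lemma isSimplePathFromTo_iff {p : List V} {x y : V} :
    G.IsSimplePathFromTo p x y ↔
      p.IsChain G.Adj ∧ p.Nodup ∧ p.head? = some x ∧ p.getLast? = some y := by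
  simp only [IsSimplePathFromTo, IsSimplePath, isWalk_iff]
  constructor
  · rintro ⟨⟨⟨-, hc⟩, hnd⟩, hh, hl⟩
    exact ⟨hc, hnd, hh, hl⟩
  · rintro ⟨hc, hnd, hh, hl⟩
    exact ⟨⟨⟨by rintro rfl; simp at hh, hc⟩, hnd⟩, hh, hl⟩

lemma exists_isWalkFromTo_iff {x y : V} :
    (∃ p, G.IsWalkFromTo p x y) ↔ Relation.ReflTransGen G.Adj x y := by
  constructor
  · rintro ⟨p, hp, hh, hl⟩
    exact reflTransGen_of_mem_of_head? (isWalk_iff.1 hp).2 hh (List.mem_of_mem_getLast? hl)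
  · intro h
    obtain ⟨l, hl, -, hh, hlast⟩ := exists_nodup_isChain_of_reflTransGen h
    exact ⟨l, isWalk_iff.2 ⟨by rintro rfl; simp at hh, hl⟩, hh, hlast⟩

lemma exists_isSimplePathFromTo {x y : V} (hR : ∀ ⦃a b⦄, R a b → G.Adj a b)
    (h : Relation.ReflTransGen R x y) :
    ∃ T, G.IsSimplePathFromTo T x y ∧ T.IsChain R := by
  obtain ⟨T, hT, hnd, hh, hl⟩ := exists_nodup_isChain_of_reflTransGen h
  exact ⟨T, isSimplePathFromTo_iff.2 ⟨hT.imp hR, hnd, hh, hl⟩, hT⟩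

lemma StronglyConnected.exists_isSimplePathFromTo (hG : G.StronglyConnected) (x y : V) :
    ∃ T, G.IsSimplePathFromTo T x y :=
  (DirGraph.exists_isSimplePathFromTo (fun _ _ h => h)
    (exists_isWalkFromTo_iff.1 (hG x y))).imp fun _ => And.left

end Walks

section Cycles

variable {G : DirGraph V} {Z : List V}

lemma isSimpleCycle_iff : G.IsSimpleCycle Z ↔
    Z.IsChain G.Adj ∧ 2 ≤ Z.length ∧ Z.head? = Z.getLast? ∧ Z.dropLast.Nodup := by
  rw [IsSimpleCycle, isWalk_iff]
  exact ⟨fun ⟨⟨_, hc⟩, h⟩ => ⟨hc, h⟩,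
    fun ⟨hc, h2, h⟩ => ⟨⟨by rintro rfl; simp at h2, hc⟩, h2, h⟩⟩

namespace IsSimpleCycle

lemma isChain (hZ : G.IsSimpleCycle Z) : Z.IsChain G.Adj := (isSimpleCycle_iff.1 hZ).1

lemma adj_of_mem_arcs (hZ : G.IsSimpleCycle Z) {x y : V} (h : (x, y) ∈ arcs Z) : G.Adj x y :=
  isChain_iff_forall_mem_arcs.1 hZ.isChain x y h

lemma nodup_tail (hZ : G.IsSimpleCycle Z) : Z.tail.Nodup := by
  obtain ⟨-, h2, hcl, hnd⟩ := hZ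
  match Z, h2 with
  | a :: b :: l, _ =>
    have hl : b :: l = (b :: l).dropLast ++ [a] := by
      rw [List.getLast?_cons_cons, List.head?_cons, eq_comm,
        List.getLast?_eq_some_getLast (List.cons_ne_nil _ _), Option.some_inj] at hcl
      rw [← hcl, List.dropLast_append_getLast]
    rw [List.tail_cons, hl]
    rw [List.dropLast_cons_cons] at hnd
    exact (List.perm_append_singleton _ _).nodup_iff.2 hnd

lemma snd_eq (hZ : G.IsSimpleCycle Z) {x y y' : V} (h : (x, y) ∈ arcs Z)
    (h' : (x, y') ∈ arcs Z) : y = y' :=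
  snd_eq_of_mem_arcs hZ.2.2.2 h h'

lemma fst_eq (hZ : G.IsSimpleCycle Z) {x x' y : V} (h : (x, y) ∈ arcs Z)
    (h' : (x', y) ∈ arcs Z) : x = x' :=
  fst_eq_of_mem_arcs hZ.nodup_tail h h'

lemma reflTransGen (hZ : G.IsSimpleCycle Z) {a b : V} (ha : a ∈ Z) (hb : b ∈ Z) :
    Relation.ReflTransGen (fun x y => (x, y) ∈ arcs Z) a b :=
  reflTransGen_of_mem_of_closed (isChain_mem_arcs Z) hZ.2.2.1 ha hb

lemma mono {G' : DirGraph V} (h : ∀ ⦃x y⦄, G'.Adj x y → G.Adj x y)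
    (hZ : G'.IsSimpleCycle Z) : G.IsSimpleCycle Z :=
  isSimpleCycle_iff.2 ⟨hZ.isChain.imp h, hZ.2⟩

lemma of_isChain {G' : DirGraph V} (hZ : G.IsSimpleCycle Z) (h : Z.IsChain G'.Adj) :
    G'.IsSimpleCycle Z :=
  isSimpleCycle_iff.2 ⟨h, hZ.2⟩

end IsSimpleCycle

lemma exists_isSimpleCycle_of_reflTransGen_avoiding {a u s : V} (hau : G.Adj a u)
    (hsa : G.Adj s a) (h : Relation.ReflTransGen (fun x y => G.Adj x y ∧ y ≠ a) u s) :
    ∃ Z, G.IsSimpleCycle Z ∧ (a, u) ∈ arcs Z ∧ (s, a) ∈ arcs Z := by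
  obtain ⟨L, hL, hnd, hh, hl⟩ := exists_nodup_isChain_of_reflTransGen h
  rcases L with _ | ⟨u', L⟩
  · simp at hh
  obtain rfl : u' = u := by simpa using hh
  have hua : u' ≠ a := fun h => G.loopless a (h ▸ hau)
  have haL : a ∉ u' :: L := fun ha =>
    hL.induction (· ≠ a) _ (fun _ _ h _ => h.2) (fun _ => hua) a ha rfl
  refine ⟨(a :: u' :: L) ++ [a], isSimpleCycle_iff.2 ⟨?_, by simp, ?_, ?_⟩, by simp, ?_⟩
  · refine List.isChain_append.2 ⟨(hL.imp fun _ _ h => h.1).cons_cons hau, List.isChain_singleton _,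
      fun x hx y hy => ?_⟩
    rw [List.getLast?_cons_cons, hl, Option.mem_some_iff] at hx
    rw [List.head?_cons, Option.mem_some_iff] at hy
    exact hx ▸ hy ▸ hsa
  · rw [List.getLast?_concat]
    rfl
  · rw [List.dropLast_concat]
    exact List.nodup_cons.2 ⟨haL, hnd⟩
  · exact arcs_subset_of_isInfix (List.suffix_cons _ _).isInfix (mem_arcs_append_singleton hl)

end Cycles

namespace IsCactus

variable {G : DirGraph V}

lemma eq_of_adj_of_reflTransGen_avoiding (hG : G.IsCactus) {a b u v : V} (hba : b ≠ a)
    (hu : G.Adj a u) (hv : G.Adj a v)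
    (hub : Relation.ReflTransGen (fun x y => G.Adj x y ∧ y ≠ a) u b)
    (hvb : Relation.ReflTransGen (fun x y => G.Adj x y ∧ y ≠ a) v b) : u = v := by
  obtain ⟨s, hbs, hsa⟩ := exists_reflTransGen_avoiding (exists_isWalkFromTo_iff.1 (hG.1 b a)) hba
  obtain ⟨Z₁, hZ₁, hau, hsa₁⟩ := exists_isSimpleCycle_of_reflTransGen_avoiding hu hsa (hub.trans hbs)
  obtain ⟨Z₂, hZ₂, hav, hsa₂⟩ := exists_isSimpleCycle_of_reflTransGen_avoiding hv hsa (hvb.trans hbs)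
  exact hZ₂.snd_eq (((hG.2 s a hsa).2 Z₁ Z₂ hZ₁ hsa₁ hZ₂ hsa₂ _).1 hau) hav

theorem isSimplePathFromTo_unique (hG : G.IsCactus) {T₁ T₂ : List V} {a b : V}
    (h₁ : G.IsSimplePathFromTo T₁ a b) (h₂ : G.IsSimplePathFromTo T₂ a b) : T₁ = T₂ := by
  induction T₁ generalizing T₂ a with
  | nil => simp [isSimplePathFromTo_iff] at h₁
  | cons x T₁ ih =>
    obtain ⟨hc₁, hn₁, hh₁, hl₁⟩ := isSimplePathFromTo_iff.1 h₁
    obtain ⟨hc₂, hn₂, hh₂, hl₂⟩ := isSimplePathFromTo_iff.1 h₂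
    obtain rfl : x = a := by simpa using hh₁
    rcases T₂ with _ | ⟨y, T₂⟩
    · simp at hh₂
    obtain rfl : x = y := by simpa using hh₂.symm
    rcases T₁ with _ | ⟨u, T₁⟩ <;> rcases T₂ with _ | ⟨v, T₂⟩
    · rfl
    · obtain rfl : x = b := by simpa using hl₁
      exact absurd (List.mem_of_mem_getLast? (List.getLast?_cons_cons.symm.trans hl₂))
        (List.nodup_cons.1 hn₂).1
    · obtain rfl : x = b := by simpa using hl₂
      exact absurd (List.mem_of_mem_getLast? (List.getLast?_cons_cons.symm.trans hl₁))
        (List.nodup_cons.1 hn₁).1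
    · have hb₁ := List.mem_of_mem_getLast? (List.getLast?_cons_cons.symm.trans hl₁)
      have hb₂ := List.mem_of_mem_getLast? (List.getLast?_cons_cons.symm.trans hl₂)
      have hbx : b ≠ x := fun h => (List.nodup_cons.1 hn₁).1 (h ▸ hb₁)
      obtain rfl : u = v := hG.eq_of_adj_of_reflTransGen_avoiding hbx
        (List.isChain_cons_cons.1 hc₁).1 (List.isChain_cons_cons.1 hc₂).1
        (reflTransGen_avoiding_of_isChain hc₁.tail (List.nodup_cons.1 hn₁).1 rfl hb₁)
        (reflTransGen_avoiding_of_isChain hc₂.tail (List.nodup_cons.1 hn₂).1 rfl hb₂)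
      exact congrArg (x :: ·)
        (ih (isSimplePathFromTo_iff.2 ⟨hc₁.tail, hn₁.of_cons, rfl, by simpa using hl₁⟩)
          (isSimplePathFromTo_iff.2 ⟨hc₂.tail, hn₂.of_cons, rfl, by simpa using hl₂⟩))

lemma isChain_mem_arcs_of_mem_cycle (hG : G.IsCactus) {Z T : List V} {a b : V}
    (hZ : G.IsSimpleCycle Z) (ha : a ∈ Z) (hb : b ∈ Z) (hT : G.IsSimplePathFromTo T a b) :
    T.IsChain (fun x y => (x, y) ∈ arcs Z) := by
  obtain ⟨S, hS, hSZ⟩ :=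
    exists_isSimplePathFromTo (fun _ _ => hZ.adj_of_mem_arcs) (hZ.reflTransGen ha hb)
  rwa [hG.isSimplePathFromTo_unique hT hS]

lemma exists_last_arc_mem_cycle (hG : G.IsCactus) {R : V → V → Prop}
    (hR : ∀ ⦃x y⦄, R x y → G.Adj x y) {Z : List V} {a b : V}
    (h : Relation.ReflTransGen R a b) (hab : a ≠ b) (hZ : G.IsSimpleCycle Z) (ha : a ∈ Z)
    (hb : b ∈ Z) : ∃ z, R z b ∧ (z, b) ∈ arcs Z := by
  obtain ⟨T, hT, hTR⟩ := exists_isSimplePathFromTo hR h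
  obtain ⟨-, -, hh, hl⟩ := isSimplePathFromTo_iff.1 hT
  obtain ⟨z, hz⟩ := exists_mem_arcs_getLast hh hl hab
  exact ⟨z, isChain_iff_forall_mem_arcs.1 hTR _ _ hz,
    isChain_iff_forall_mem_arcs.1 (hG.isChain_mem_arcs_of_mem_cycle hZ ha hb hT) _ _ hz⟩

lemma exists_first_arc_mem_cycle (hG : G.IsCactus) {R : V → V → Prop}
    (hR : ∀ ⦃x y⦄, R x y → G.Adj x y) {Z : List V} {a b : V}
    (h : Relation.ReflTransGen R a b) (hab : a ≠ b) (hZ : G.IsSimpleCycle Z) (ha : a ∈ Z)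
    (hb : b ∈ Z) : ∃ z, R a z ∧ (a, z) ∈ arcs Z := by
  obtain ⟨T, hT, hTR⟩ := exists_isSimplePathFromTo hR h
  obtain ⟨-, -, hh, hl⟩ := isSimplePathFromTo_iff.1 hT
  obtain ⟨z, hz⟩ := exists_mem_arcs_head hh hl hab
  exact ⟨z, isChain_iff_forall_mem_arcs.1 hTR _ _ hz,
    isChain_iff_forall_mem_arcs.1 (hG.isChain_mem_arcs_of_mem_cycle hZ ha hb hT) _ _ hz⟩

end IsCactus

namespace Subgraph.IsCactus

variable {G : DirGraph V} {H : Subgraph G}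

lemma reflTransGen (hH : H.IsCactus) {x y : V} (hx : x ∈ H.verts) (hy : y ∈ H.verts) :
    Relation.ReflTransGen H.Adj x y :=
  exists_isWalkFromTo_iff.1 (hH.2.1 x hx y hy)

lemma isChain_of_isSimplePathFromTo (hG : G.IsCactus) (hH : H.IsCactus) {T : List V} {a b : V}
    (ha : a ∈ H.verts) (hb : b ∈ H.verts) (hT : G.IsSimplePathFromTo T a b) :
    T.IsChain H.Adj := by
  obtain ⟨S, hS, hSH⟩ :=
    exists_isSimplePathFromTo (fun _ _ h => H.adj_sub h) (hH.reflTransGen ha hb)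
  rwa [hG.isSimplePathFromTo_unique hT hS]

lemma mem_verts_of_mem_path (hG : G.IsCactus) (hH : H.IsCactus) {T : List V} {a b v : V}
    (ha : a ∈ H.verts) (hb : b ∈ H.verts) (hT : G.IsSimplePathFromTo T a b) (hv : v ∈ T) :
    v ∈ H.verts :=
  (hH.isChain_of_isSimplePathFromTo hG ha hb hT).induction (· ∈ H.verts) _
    (fun _ _ h _ => H.mem_right h)
    (fun hne => by
      rwa [Option.some_inj.1 ((List.head?_eq_some_head hne).symm.trans
        (isSimplePathFromTo_iff.1 hT).2.2.1)]) v hv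

lemma adj_of_mem_verts (hG : G.IsCactus) (hH : H.IsCactus) {u v : V} (hu : u ∈ H.verts)
    (hv : v ∈ H.verts) (huv : G.Adj u v) : H.Adj u v := by
  have huv' : u ≠ v := fun h => G.loopless u (h ▸ huv)
  have hT : G.IsSimplePathFromTo [u, v] u v :=
    isSimplePathFromTo_iff.2 ⟨List.isChain_pair.2 huv, by simpa using huv', rfl, rfl⟩
  exact List.isChain_pair.1 (hH.isChain_of_isSimplePathFromTo hG hu hv hT)

end Subgraph.IsCactus

section MinimalSubCactus

variable {G : DirGraph V} {r v w x y : V}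

lemma mem_C_iff (hw : w ≠ r) : x ∈ (C G r w).verts ↔
    ∀ H : Subgraph G, H.IsCactus → r ∈ H.verts → w ∈ H.verts → x ∈ H.verts := by
  simp [C, if_neg hw, CsubOf, Set.insert_subset_iff]

lemma C_adj_iff (hw : w ≠ r) : (C G r w).Adj x y ↔
    G.Adj x y ∧ ∀ H : Subgraph G, H.IsCactus → r ∈ H.verts → w ∈ H.verts → H.Adj x y := by
  simp [C, if_neg hw, CsubOf, Set.insert_subset_iff]

lemma mem_C_self (G : DirGraph V) (r v : V) : v ∈ (C G r v).verts := by
  by_cases hv : v = r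
  · subst hv
    simp [C, singleVert]
  · exact (mem_C_iff hv).2 fun _ _ _ h => h

lemma pre_of_mem_C (hw : w ≠ r) (hv : v ∈ (C G r w).verts) : pre G r v w := by
  have hvH := (mem_C_iff hw).1 hv
  by_cases hvr : v = r
  · subst hvr
    refine ⟨?_, fun _ _ h => by simp [C, singleVert] at h⟩
    simpa [C, singleVert] using hv
  · refine ⟨fun x hx => (mem_C_iff hw).2 fun H hH hr hwH =>
      (mem_C_iff hvr).1 hx H hH hr (hvH H hH hr hwH), fun x y h => ?_⟩
    obtain ⟨hxy, hH⟩ := (C_adj_iff hvr).1 h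
    exact (C_adj_iff hw).2 ⟨hxy, fun H hH' hr hwH => hH H hH' hr (hvH H hH' hr hwH)⟩

lemma C_adj_of_mem (hG : G.IsCactus) (hw : w ≠ r) (hx : x ∈ (C G r w).verts)
    (hy : y ∈ (C G r w).verts) (hxy : G.Adj x y) : (C G r w).Adj x y :=
  (C_adj_iff hw).2 ⟨hxy, fun H hH hr hwH => hH.adj_of_mem_verts hG
    ((mem_C_iff hw).1 hx H hH hr hwH) ((mem_C_iff hw).1 hy H hH hr hwH) hxy⟩

lemma mem_C_of_mem_path (hG : G.IsCactus) (hw : w ≠ r) {T : List V}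
    (hT : G.IsSimplePathFromTo T r w ∨ G.IsSimplePathFromTo T w r) (hv : v ∈ T) :
    v ∈ (C G r w).verts :=
  (mem_C_iff hw).2 fun _ hH hr hwH => hT.elim
    (fun hT => hH.mem_verts_of_mem_path hG hr hwH hT hv)
    (fun hT => hH.mem_verts_of_mem_path hG hwH hr hT hv)

end MinimalSubCactus

def cycleClosure (G : DirGraph V) (W : List V) : Subgraph G where
  verts := {v | ∃ e ∈ arcs W, ∃ Z, G.IsSimpleCycle Z ∧ e ∈ arcs Z ∧ v ∈ Z}
  Adj x y := ∃ e ∈ arcs W, ∃ Z, G.IsSimpleCycle Z ∧ e ∈ arcs Z ∧ (x, y) ∈ arcs Z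
  adj_sub := fun _ _ ⟨_, _, _, hZ, _, h⟩ => hZ.adj_of_mem_arcs h
  mem_left := fun _ _ ⟨e, he, Z, hZ, heZ, h⟩ => ⟨e, he, Z, hZ, heZ, fst_mem_of_mem_arcs h⟩
  mem_right := fun _ _ ⟨e, he, Z, hZ, heZ, h⟩ => ⟨e, he, Z, hZ, heZ, snd_mem_of_mem_arcs h⟩

section CycleClosure

variable {G : DirGraph V} {W Z : List V}

lemma isChain_cycleClosure {e : V × V} (he : e ∈ arcs W) (hZ : G.IsSimpleCycle Z)
    (heZ : e ∈ arcs Z) : Z.IsChain (cycleClosure G W).Adj :=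
  isChain_iff_forall_mem_arcs.2 fun _ _ h => ⟨e, he, Z, hZ, heZ, h⟩

lemma cycleClosure_adj_of_mem_arcs (hG : G.CactusArcCond) (hW : W.IsChain G.Adj) {x y : V}
    (he : (x, y) ∈ arcs W) : (cycleClosure G W).Adj x y := by
  obtain ⟨Z, hZ, hxy⟩ := (hG x y (isChain_iff_forall_mem_arcs.1 hW x y he)).1
  exact ⟨(x, y), he, Z, hZ, hxy, hxy⟩

lemma mem_cycleClosure_verts (hG : G.CactusArcCond) (hW : W.IsChain G.Adj)
    (hW₂ : 2 ≤ W.length) {v : V} (hv : v ∈ W) : v ∈ (cycleClosure G W).verts := by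
  obtain ⟨w, h | h⟩ := exists_mem_arcs_of_mem hv hW₂
  · exact (cycleClosure G W).mem_left (cycleClosure_adj_of_mem_arcs hG hW h)
  · exact (cycleClosure G W).mem_right (cycleClosure_adj_of_mem_arcs hG hW h)

lemma isCactus_cycleClosure (hG : G.CactusArcCond) (hW : W.IsChain G.Adj)
    (hcl : W.head? = W.getLast?) (hW₂ : 2 ≤ W.length) : (cycleClosure G W).IsCactus := by
  set D := cycleClosure G W
  have hWD : W.IsChain D.Adj :=
    isChain_iff_forall_mem_arcs.2 fun _ _ h => cycleClosure_adj_of_mem_arcs hG hW h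
  have hreach : ∀ v ∈ D.verts, ∃ u ∈ W,
      Relation.ReflTransGen D.Adj v u ∧ Relation.ReflTransGen D.Adj u v := by
    rintro v ⟨⟨u, u'⟩, he, Z, hZ, heZ, hv⟩
    have hZD := isChain_cycleClosure he hZ heZ
    have hu := fst_mem_of_mem_arcs heZ
    exact ⟨u, fst_mem_of_mem_arcs he, reflTransGen_of_mem_of_closed hZD hZ.2.2.1 hv hu,
      reflTransGen_of_mem_of_closed hZD hZ.2.2.1 hu hv⟩
  refine ⟨⟨_, mem_cycleClosure_verts hG hW hW₂ (List.getLast_mem (l := W) ?_)⟩,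
    fun x hx y hy => ?_, fun x y hxy => ⟨?_, fun Z₁ Z₂ h₁ hxy₁ h₂ hxy₂ => ?_⟩⟩
  · rintro rfl
    simp at hW₂
  · obtain ⟨u, hu, hxu, -⟩ := hreach x hx
    obtain ⟨u', hu', -, hu'y⟩ := hreach y hy
    exact exists_isWalkFromTo_iff.2
      (hxu.trans ((reflTransGen_of_mem_of_closed hWD hcl hu hu').trans hu'y))
  · obtain ⟨e, he, Z, hZ, heZ, h⟩ := hxy
    exact ⟨Z, hZ.of_isChain (isChain_cycleClosure he hZ heZ), h⟩
  · exact (hG x y (D.adj_sub hxy)).2 Z₁ Z₂ (h₁.mono fun _ _ h => D.adj_sub h) hxy₁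
      (h₂.mono fun _ _ h => D.adj_sub h) hxy₂

lemma cycleClosure_adj_into (hG : G.IsCactus) (hW : W.IsChain G.Adj) {c p x : V}
    (hh : W.head? = some c) (hl : W.getLast? = some c) (hp : ∀ z, (z, c) ∈ arcs W → z = p)
    (hx : (cycleClosure G W).Adj x c) : x = p := by
  obtain ⟨⟨u, v⟩, he, Z, hZ, heZ, hxc⟩ := hx
  suffices hpZ : (p, c) ∈ arcs Z from hZ.fst_eq hxc hpZ
  by_cases hv : v = c
  · subst hv
    rwa [← hp u he]
  · obtain ⟨z, hzW, hzZ⟩ := hG.exists_last_arc_mem_cycle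
      (fun _ _ h => isChain_iff_forall_mem_arcs.1 hW _ _ h)
      (reflTransGen_of_mem_of_closed (isChain_mem_arcs W) (hh.trans hl.symm)
        (snd_mem_of_mem_arcs he) (List.mem_of_mem_getLast? hl))
      hv hZ (snd_mem_of_mem_arcs heZ) (snd_mem_of_mem_arcs hxc)
    rwa [← hp z hzW]

lemma cycleClosure_adj_out_of (hG : G.IsCactus) (hW : W.IsChain G.Adj) {c q y : V}
    (hh : W.head? = some c) (hl : W.getLast? = some c) (hq : ∀ z, (c, z) ∈ arcs W → z = q)
    (hy : (cycleClosure G W).Adj c y) : y = q := by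
  obtain ⟨⟨u, v⟩, he, Z, hZ, heZ, hcy⟩ := hy
  suffices hqZ : (c, q) ∈ arcs Z from hZ.snd_eq hcy hqZ
  by_cases hu : u = c
  · subst hu
    rwa [← hq v he]
  · obtain ⟨z, hzW, hzZ⟩ := hG.exists_first_arc_mem_cycle
      (fun _ _ h => isChain_iff_forall_mem_arcs.1 hW _ _ h)
      (reflTransGen_of_mem_of_closed (isChain_mem_arcs W) (hh.trans hl.symm)
        (List.mem_of_mem_head? hh) (fst_mem_of_mem_arcs he))
      (Ne.symm hu) hZ (fst_mem_of_mem_arcs hcy) (fst_mem_of_mem_arcs heZ)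
    rwa [← hq z hzW]

end CycleClosure

section Root

variable {G : DirGraph V} {r c p q x y : V} {P Q : List V}

lemma isChain_append_tail_of_paths (hP : G.IsSimplePathFromTo P r c)
    (hQ : G.IsSimplePathFromTo Q c r) : (Q ++ P.tail).IsChain G.Adj ∧
      (Q ++ P.tail).head? = some c ∧ (Q ++ P.tail).getLast? = some c := by
  obtain ⟨hPc, -, hPh, hPl⟩ := isSimplePathFromTo_iff.1 hP
  obtain ⟨hQc, -, hQh, hQl⟩ := isSimplePathFromTo_iff.1 hQ
  have h : Q.getLast? = P.head? := hQl.trans hPh.symm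
  exact ⟨isChain_append_tail hQc hPc h, by simp [List.head?_append, hQh],
    (getLast?_append_tail h).trans hPl⟩

lemma C_adj_le_cycleClosure (hG : G.IsCactus) (hc : c ≠ r) (hP : G.IsSimplePathFromTo P r c)
    (hQ : G.IsSimplePathFromTo Q c r) (h : (C G r c).Adj x y) :
    (cycleClosure G (Q ++ P.tail)).Adj x y := by
  obtain ⟨hW, hh, hl⟩ := isChain_append_tail_of_paths hP hQ
  obtain ⟨-, -, hQh, hQl⟩ := isSimplePathFromTo_iff.1 hQ
  obtain ⟨q, hq⟩ := exists_mem_arcs_head hQh hQl hc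
  have hW₂ : 2 ≤ (Q ++ P.tail).length :=
    (two_le_length_of_mem_arcs hq).trans (by simp)
  exact ((C_adj_iff hc).1 h).2 _ (isCactus_cycleClosure hG.2 hW (hh.trans hl.symm) hW₂)
    (mem_cycleClosure_verts hG.2 hW hW₂ (List.mem_append_left _ (List.mem_of_mem_getLast? hQl)))
    (mem_cycleClosure_verts hG.2 hW hW₂ (List.mem_of_mem_head? hh))

lemma C_adj_into_iff (hG : G.IsCactus) (hc : c ≠ r) (hP : G.IsSimplePathFromTo P r c)
    (hQ : G.IsSimplePathFromTo Q c r) (hp : (p, c) ∈ arcs P) :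
    (C G r c).Adj x c ↔ x = p := by
  obtain ⟨hW, hh, hl⟩ := isChain_append_tail_of_paths hP hQ
  obtain ⟨hPc, hPn, hPh, -⟩ := isSimplePathFromTo_iff.1 hP
  obtain ⟨-, hQn, hQh, hQl⟩ := isSimplePathFromTo_iff.1 hQ
  refine ⟨fun h => cycleClosure_adj_into hG hW hh hl (fun z hz => ?_)
    (C_adj_le_cycleClosure hG hc hP hQ h), ?_⟩
  · rcases (mem_arcs_append_tail (hQl.trans hPh.symm)).1 hz with hz | hz
    · exact absurd (snd_mem_tail_of_mem_arcs hz) (notMem_tail_of_head? hQn hQh)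
    · exact fst_eq_of_mem_arcs (hPn.sublist (List.tail_sublist _)) hz hp
  · rintro rfl
    exact C_adj_of_mem hG hc (mem_C_of_mem_path hG hc (Or.inl hP) (fst_mem_of_mem_arcs hp))
      (mem_C_self G r c) (isChain_iff_forall_mem_arcs.1 hPc _ _ hp)

lemma C_adj_out_of_iff (hG : G.IsCactus) (hc : c ≠ r) (hP : G.IsSimplePathFromTo P r c)
    (hQ : G.IsSimplePathFromTo Q c r) (hq : (c, q) ∈ arcs Q) :
    (C G r c).Adj c y ↔ y = q := by
  obtain ⟨hW, hh, hl⟩ := isChain_append_tail_of_paths hP hQ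
  obtain ⟨-, hPn, hPh, hPl⟩ := isSimplePathFromTo_iff.1 hP
  obtain ⟨hQc, hQn, -, hQl⟩ := isSimplePathFromTo_iff.1 hQ
  refine ⟨fun h => cycleClosure_adj_out_of hG hW hh hl (fun z hz => ?_)
    (C_adj_le_cycleClosure hG hc hP hQ h), ?_⟩
  · rcases (mem_arcs_append_tail (hQl.trans hPh.symm)).1 hz with hz | hz
    · exact snd_eq_of_mem_arcs (hQn.sublist (List.dropLast_sublist _)) hz hq
    · exact absurd (fst_mem_dropLast_of_mem_arcs hz) (notMem_dropLast_of_getLast? hPn hPl)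
  · rintro rfl
    exact C_adj_of_mem hG hc (mem_C_self G r c)
      (mem_C_of_mem_path hG hc (Or.inr hQ) (snd_mem_of_mem_arcs hq))
      (isChain_iff_forall_mem_arcs.1 hQc _ _ hq)

lemma mem_verts_of_adj_into (hG : G.IsCactus) (hP : G.IsSimplePathFromTo P r c)
    (hp : (p, c) ∈ arcs P) (hx : G.Adj x c) (hxp : x ≠ p) {H : Subgraph G} (hH : H.IsCactus)
    (hr : r ∈ H.verts) (hxH : x ∈ H.verts) : c ∈ H.verts := by
  obtain ⟨hPc, hPn, hPh, hPl⟩ := isSimplePathFromTo_iff.1 hP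
  obtain ⟨Z, hZ, hxc⟩ := (hG.2 x c hx).1
  have hxP : Relation.ReflTransGen (fun a b => H.Adj a b ∨ (a, b) ∈ arcs P) x c :=
    (Relation.ReflTransGen.mono (fun _ _ => Or.inl) _ _ (hH.reflTransGen hxH hr)).trans
      (reflTransGen_of_mem_of_head? ((isChain_mem_arcs P).imp fun _ _ => Or.inr) hPh
        (List.mem_of_mem_getLast? hPl))
  obtain ⟨z, hz | hz, hzc⟩ := hG.exists_last_arc_mem_cycle
    (fun _ _ h => h.elim (fun h => H.adj_sub h) (isChain_iff_forall_mem_arcs.1 hPc _ _))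
    hxP (fun h => G.loopless c (h ▸ hx)) hZ (fst_mem_of_mem_arcs hxc) (snd_mem_of_mem_arcs hxc)
  · exact H.mem_right hz
  · rw [fst_eq_of_mem_arcs (hPn.sublist (List.tail_sublist _)) hz hp] at hzc
    exact absurd (hZ.fst_eq hxc hzc) hxp

lemma mem_verts_of_adj_out_of (hG : G.IsCactus) (hQ : G.IsSimplePathFromTo Q c r)
    (hq : (c, q) ∈ arcs Q) (hy : G.Adj c y) (hyq : y ≠ q) {H : Subgraph G} (hH : H.IsCactus)
    (hr : r ∈ H.verts) (hyH : y ∈ H.verts) : c ∈ H.verts := by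
  obtain ⟨hQc, hQn, hQh, hQl⟩ := isSimplePathFromTo_iff.1 hQ
  obtain ⟨Z, hZ, hcy⟩ := (hG.2 c y hy).1
  have hQy : Relation.ReflTransGen (fun a b => H.Adj a b ∨ (a, b) ∈ arcs Q) c y :=
    (reflTransGen_of_mem_of_head? ((isChain_mem_arcs Q).imp fun _ _ => Or.inr) hQh
        (List.mem_of_mem_getLast? hQl)).trans
      (Relation.ReflTransGen.mono (fun _ _ => Or.inl) _ _ (hH.reflTransGen hr hyH))
  obtain ⟨z, hz | hz, hcz⟩ := hG.exists_first_arc_mem_cycle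
    (fun _ _ h => h.elim (fun h => H.adj_sub h) (isChain_iff_forall_mem_arcs.1 hQc _ _))
    hQy (fun h => G.loopless c (h ▸ hy)) hZ (fst_mem_of_mem_arcs hcy) (snd_mem_of_mem_arcs hcy)
  · exact H.mem_left hz
  · rw [snd_eq_of_mem_arcs (hQn.sublist (List.dropLast_sublist _)) hz hq] at hcz
    exact absurd (hZ.snd_eq hcy hcz) hyq

lemma pre_of_adj_into (hG : G.IsCactus) (hP : G.IsSimplePathFromTo P r c)
    (hp : (p, c) ∈ arcs P) (hx : G.Adj x c) (hxp : x ≠ p) : pre G r c x := by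
  have hxr : x ≠ r := by
    rintro rfl
    have hne : x ≠ c := by rintro rfl; exact G.loopless x hx
    have hxc : G.IsSimplePathFromTo [x, c] x c :=
      isSimplePathFromTo_iff.2 ⟨List.isChain_pair.2 hx, by simpa using hne, rfl, rfl⟩
    rw [hG.isSimplePathFromTo_unique hP hxc] at hp
    have hpx : p = x := by simpa using hp
    exact hxp hpx.symm
  exact pre_of_mem_C hxr ((mem_C_iff hxr).2 fun _ hH hr hxH =>
    mem_verts_of_adj_into hG hP hp hx hxp hH hr hxH)

lemma pre_of_adj_out_of (hG : G.IsCactus) (hQ : G.IsSimplePathFromTo Q c r)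
    (hq : (c, q) ∈ arcs Q) (hy : G.Adj c y) (hyq : y ≠ q) : pre G r c y := by
  have hyr : y ≠ r := by
    rintro rfl
    have hne : c ≠ y := by rintro rfl; exact G.loopless c hy
    have hcy : G.IsSimplePathFromTo [c, y] c y :=
      isSimplePathFromTo_iff.2 ⟨List.isChain_pair.2 hy, by simpa using hne, rfl, rfl⟩
    rw [hG.isSimplePathFromTo_unique hQ hcy] at hq
    have hqy : q = y := by simpa using hq
    exact hyq hqy.symm
  exact pre_of_mem_C hyr ((mem_C_iff hyr).2 fun _ hH hr hyH =>
    mem_verts_of_adj_out_of hG hQ hq hy hyq hH hr hyH)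

end Root

end DirGraph

open DirGraph in
theorem connectingPoint_arcs_in_C_general {V : Type} (G : DirGraph V)
    (r c : V) (hG : G.IsCactus) (hc : c ≠ r) :
    (∃! x, (C G r c).Adj x c) ∧ (∃! y, (C G r c).Adj c y) ∧
    (∀ x, G.Adj x c →
      ((C G r c).Adj x c → pre G r x c) ∧
      (¬ (C G r c).Adj x c → pre G r c x ∧ ¬ pre G r x c)) ∧
    (∀ y, G.Adj c y →
      ((C G r c).Adj c y → pre G r y c) ∧
      (¬ (C G r c).Adj c y → pre G r c y ∧ ¬ pre G r y c)) := by
  obtain ⟨P, hP⟩ := hG.1.exists_isSimplePathFromTo r c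
  obtain ⟨Q, hQ⟩ := hG.1.exists_isSimplePathFromTo c r
  obtain ⟨-, -, hPh, hPl⟩ := isSimplePathFromTo_iff.1 hP
  obtain ⟨-, -, hQh, hQl⟩ := isSimplePathFromTo_iff.1 hQ
  obtain ⟨p, hp⟩ := exists_mem_arcs_getLast hPh hPl hc.symm
  obtain ⟨q, hq⟩ := exists_mem_arcs_head hQh hQl hc
  have hin : ∀ x, (C G r c).Adj x c ↔ x = p := fun _ => C_adj_into_iff hG hc hP hQ hp
  have hout : ∀ y, (C G r c).Adj c y ↔ y = q := fun _ => C_adj_out_of_iff hG hc hP hQ hq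
  refine ⟨⟨p, (hin p).2 rfl, fun x => (hin x).1⟩, ⟨q, (hout q).2 rfl, fun y => (hout y).1⟩,
    fun x hx => ⟨fun h => pre_of_mem_C hc ((C G r c).mem_left h), fun h => ⟨?_, ?_⟩⟩,
    fun y hy => ⟨fun h => pre_of_mem_C hc ((C G r c).mem_right h), fun h => ⟨?_, ?_⟩⟩⟩
  · exact pre_of_adj_into hG hP hp hx (mt (hin x).2 h)
  · exact fun hxc => h (C_adj_of_mem hG hc (hxc.1 (mem_C_self G r x)) (mem_C_self G r c) hx)
  · exact pre_of_adj_out_of hG hQ hq hy (mt (hout y).2 h)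
  · exact fun hyc => h (C_adj_of_mem hG hc (mem_C_self G r c) (hyc.1 (mem_C_self G r y)) hy)

open DirGraph in
/-- For a connecting point `c ≠ r` of a rooted cactus digraph with
`δ⁻(c) = δ⁺(c) = n ≥ 2`, the subgraph `C(c)` contains exactly one incoming
and one outgoing arc of `c`; for the sources/targets `x`, `y` of these arcs
`x ≼ c` and `y ≼ c`, while `c ≺ x'` and `c ≺ y'` for all other in-neighbours
`x'` and out-neighbours `y'`. -/
theorem connectingPoint_arcs_in_C {V : Type} [Finite V] (G : DirGraph V)
    (r c : V) (hG : G.IsCactus) (hc : c ≠ r) (hcp : G.IsConnectingPoint c)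
    (n : ℕ) (hn : 2 ≤ n) (hin : G.inDeg c = n) (hout : G.outDeg c = n) :
    (∃! x, (C G r c).Adj x c) ∧ (∃! y, (C G r c).Adj c y) ∧
    (∀ x, G.Adj x c →
      ((C G r c).Adj x c → pre G r x c) ∧
      (¬ (C G r c).Adj x c → pre G r c x ∧ ¬ pre G r x c)) ∧
    (∀ y, G.Adj c y →
      ((C G r c).Adj c y → pre G r y c) ∧
      (¬ (C G r c).Adj c y → pre G r c y ∧ ¬ pre G r y c)) :=
  connectingPoint_arcs_in_C_general G r c hG hc
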